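/- Let U be a nonempty open arc of the unit circle S^1 in R^2. Then there exist vectors v1, v2 in Z^2 such that v1 and v2 are linearly independent over R, |v1| = |v2| and this common norm is a (positive) integer, and v1/|v1| and v2/|v2| both lie in U. -/

import Mathlib

/-!
Rational points are dense on the unit circle: the rational parametrization
`t ↦ ((1 - t²)/(1 + t²), 2t/(1 + t²))` covers every point but `(-1, 0)`, which is covered by its
negative, and sends rational `t` to rational points. So a relatively open set `V ∩ S¹` containing
`x` contains two distinct rational unit vectors `p, q` within distance `1` of `x`; in particular
`p ≠ ±q`. Clearing denominators with a common multiple `N` turns `p` and `q` into integer vectors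
`N p` and `N q` of norm `N`.
-/

/-- The real vector in `ℝ²` associated to an integer vector. -/
noncomputable def intVec2 (v : Fin 2 → ℤ) : EuclideanSpace ℝ (Fin 2) :=
  WithLp.toLp 2 (fun i => (v i : ℝ))

open Metric

lemma intVec2_smul (c : ℤ) (v : Fin 2 → ℤ) : intVec2 (c • v) = (c : ℝ) • intVec2 v := by
  ext i; simp [intVec2]

lemma intVec2_neg (v : Fin 2 → ℤ) : intVec2 (-v) = -intVec2 v := by
  ext i; simp [intVec2]

lemma linearIndependent_pair_of_norm_eq {E : Type*} [NormedAddCommGroup E] [NormedSpace ℝ E]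
    {a b : E} (hb : b ≠ 0) (hab : ‖a‖ = ‖b‖) (hne : a ≠ b) (hne_neg : a ≠ -b) :
    LinearIndependent ℝ ![a, b] := by
  refine linearIndependent_fin2.2 ⟨hb, fun c hc => ?_⟩
  simp only [Matrix.cons_val_one, Matrix.cons_val_zero] at hc
  have hc1 : |c| = 1 := by
    have := congrArg norm hc
    rw [norm_smul, Real.norm_eq_abs, hab] at this
    exact (mul_eq_right₀ (norm_ne_zero_iff.2 hb)).1 this
  rcases abs_eq zero_le_one |>.1 hc1 with rfl | rfl
  · exact hne (by simpa using hc.symm)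
  · exact hne_neg (by simpa using hc.symm)

lemma ne_neg_of_mem_ball {E : Type*} [NormedAddCommGroup E] [NormedSpace ℝ E] {x p q : E}
    {r : ℝ} (hp : p ∈ ball x r) (hq : q ∈ ball x r) (hq_norm : ‖q‖ = r) : p ≠ -q := by
  rintro rfl
  have h : dist (-q) q < r + r :=
    calc dist (-q) q ≤ dist (-q) x + dist x q := dist_triangle _ _ _
      _ < r + r := add_lt_add hp (mem_ball'.1 hq)
  rw [dist_eq_norm, ← neg_add', norm_neg, ← two_smul ℝ q, norm_smul] at h
  norm_num [hq_norm] at h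
  linarith

lemma exists_ratCast_ne_mem_preimage {X : Type*} [TopologicalSpace X] {f : ℝ → X}
    (hf : Continuous f) {W : Set X} (hW : IsOpen W) {t : ℝ} (ht : f t ∈ W) :
    ∃ r s : ℚ, r ≠ s ∧ f r ∈ W ∧ f s ∈ W := by
  have hD : Dense (Set.range ((↑) : ℚ → ℝ)) := Rat.denseRange_cast
  have hO : IsOpen (f ⁻¹' W) := hW.preimage hf
  obtain ⟨_, ⟨r, rfl⟩, hr⟩ := hD.exists_mem_open hO ⟨t, ht⟩
  obtain ⟨_, ⟨⟨s, rfl⟩, hsr⟩, hs⟩ := (hD.sdiff_singleton (r : ℝ)).exists_mem_open hO ⟨t, ht⟩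
  exact ⟨r, s, fun h => hsr (by rw [h]; rfl), hr, hs⟩

def IsRationalUnitVector (p : EuclideanSpace ℝ (Fin 2)) : Prop :=
  ‖p‖ = 1 ∧ ∃ (n : ℕ) (v : Fin 2 → ℤ), 0 < n ∧ intVec2 v = (n : ℝ) • p

namespace IsRationalUnitVector

lemma neg {p : EuclideanSpace ℝ (Fin 2)} (hp : IsRationalUnitVector p) :
    IsRationalUnitVector (-p) := by
  obtain ⟨hp1, n, v, hn, hv⟩ := hp
  exact ⟨by rwa [norm_neg], n, -v, hn, by rw [intVec2_neg, hv, smul_neg]⟩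

lemma exists_common_multiple {p q : EuclideanSpace ℝ (Fin 2)} (hp : IsRationalUnitVector p)
    (hq : IsRationalUnitVector q) :
    ∃ (N : ℕ) (v₁ v₂ : Fin 2 → ℤ), 0 < N ∧ intVec2 v₁ = (N : ℝ) • p ∧
      intVec2 v₂ = (N : ℝ) • q := by
  obtain ⟨-, n, v, hn, hv⟩ := hp
  obtain ⟨-, m, w, hm, hw⟩ := hq
  refine ⟨n * m, (m : ℤ) • v, (n : ℤ) • w, Nat.mul_pos hn hm, ?_, ?_⟩
  · rw [intVec2_smul, hv, smul_smul, Int.cast_natCast, Nat.cast_mul, mul_comm]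
  · rw [intVec2_smul, hw, smul_smul, Int.cast_natCast, Nat.cast_mul]

end IsRationalUnitVector

noncomputable def circleParam (t : ℝ) : EuclideanSpace ℝ (Fin 2) :=
  !₂[(1 - t ^ 2) / (1 + t ^ 2), 2 * t / (1 + t ^ 2)]

lemma continuous_circleParam : Continuous circleParam := by
  refine (PiLp.continuous_toLp 2 _).comp (continuous_pi fun i => ?_)
  have h : ∀ t : ℝ, 1 + t ^ 2 ≠ 0 := fun t => by positivity
  fin_cases i <;> simp only [Fin.zero_eta, Fin.mk_one, Matrix.cons_val_zero,
    Matrix.cons_val_one] <;> fun_prop (disch := exact h _)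

lemma norm_circleParam (t : ℝ) : ‖circleParam t‖ = 1 := by
  have h : 1 + t ^ 2 ≠ 0 := by positivity
  rw [← pow_eq_one_iff_of_nonneg (norm_nonneg _) two_ne_zero, EuclideanSpace.real_norm_sq_eq]
  simp [circleParam, Fin.sum_univ_two]
  field_simp
  ring

lemma circleParam_injective : Function.Injective circleParam := by
  intro s t h
  have h0 := congrArg (· 0) h
  have h1 := congrArg (· 1) h
  have hs : 1 + s ^ 2 ≠ 0 := by positivity
  have ht : 1 + t ^ 2 ≠ 0 := by positivity
  simp only [circleParam, PiLp.toLp_apply, Matrix.cons_val_zero, Matrix.cons_val_one] at h0 h1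
  rw [div_eq_div_iff hs ht] at h0 h1
  have hsq : s ^ 2 = t ^ 2 := by linarith
  rw [hsq] at h1
  have h2 : 2 * s * (1 + t ^ 2) = 2 * t * (1 + t ^ 2) := by linarith
  linarith [mul_right_cancel₀ ht h2]

lemma exists_eq_circleParam_or_neg {x : EuclideanSpace ℝ (Fin 2)} (hx : ‖x‖ = 1) :
    ∃ t, x = circleParam t ∨ x = -circleParam t := by
  have hx2 : x 0 ^ 2 + x 1 ^ 2 = 1 := by
    simpa [Fin.sum_univ_two, hx] using (EuclideanSpace.real_norm_sq_eq x).symm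
  by_cases h : x 0 = -1
  · have h1 : x 1 = 0 := by nlinarith
    refine ⟨0, Or.inr ?_⟩
    ext i
    fin_cases i <;> simp [circleParam, h, h1]
  · have hpos : 0 < 1 + x 0 := by
      have : -1 < x 0 := lt_of_le_of_ne (by nlinarith) (Ne.symm h)
      linarith
    have key : 1 + (x 1 / (1 + x 0)) ^ 2 = 2 / (1 + x 0) := by
      field_simp; nlinarith
    refine ⟨x 1 / (1 + x 0), Or.inl ?_⟩
    ext i
    fin_cases i <;> simp only [circleParam, PiLp.toLp_apply, Fin.zero_eta, Fin.mk_one,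
      Matrix.cons_val_zero, Matrix.cons_val_one, key] <;> field_simp
    nlinarith

lemma isRationalUnitVector_circleParam_ratCast (r : ℚ) :
    IsRationalUnitVector (circleParam r) := by
  refine ⟨norm_circleParam r, r.num.natAbs ^ 2 + r.den ^ 2,
    ![r.den ^ 2 - r.num ^ 2, 2 * r.num * r.den], by positivity, ?_⟩
  have hd : (r.den : ℝ) ≠ 0 := by positivity
  ext i
  fin_cases i <;> simp [intVec2, circleParam, Rat.cast_def] <;> field_simp <;> ring

lemma exists_isRationalUnitVector_ne_mem {x : EuclideanSpace ℝ (Fin 2)} (hx : ‖x‖ = 1)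
    {W : Set (EuclideanSpace ℝ (Fin 2))} (hW : IsOpen W) (hxW : x ∈ W) :
    ∃ p q, p ≠ q ∧ IsRationalUnitVector p ∧ IsRationalUnitVector q ∧ p ∈ W ∧ q ∈ W := by
  obtain ⟨t, rfl | rfl⟩ := exists_eq_circleParam_or_neg hx
  · obtain ⟨r, s, hrs, hr, hs⟩ := exists_ratCast_ne_mem_preimage continuous_circleParam hW hxW
    exact ⟨_, _, circleParam_injective.ne (Rat.cast_injective.ne hrs),
      isRationalUnitVector_circleParam_ratCast r, isRationalUnitVector_circleParam_ratCast s,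
      hr, hs⟩
  · obtain ⟨r, s, hrs, hr, hs⟩ :=
      exists_ratCast_ne_mem_preimage continuous_circleParam.neg hW hxW
    exact ⟨_, _, neg_injective.ne (circleParam_injective.ne (Rat.cast_injective.ne hrs)),
      (isRationalUnitVector_circleParam_ratCast r).neg,
      (isRationalUnitVector_circleParam_ratCast s).neg, hr, hs⟩

theorem lattice_vectors_in_arc_general (U : Set (EuclideanSpace ℝ (Fin 2)))
    (hne : U.Nonempty)
    (hopen : ∃ V : Set (EuclideanSpace ℝ (Fin 2)), IsOpen V ∧
      U = V ∩ Metric.sphere (0 : EuclideanSpace ℝ (Fin 2)) 1) :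
    ∃ v₁ v₂ : Fin 2 → ℤ,
      LinearIndependent ℝ ![intVec2 v₁, intVec2 v₂] ∧
      ‖intVec2 v₁‖ = ‖intVec2 v₂‖ ∧
      (∃ N : ℕ, 0 < N ∧ ‖intVec2 v₁‖ = (N : ℝ)) ∧
      ‖intVec2 v₁‖⁻¹ • intVec2 v₁ ∈ U ∧
      ‖intVec2 v₂‖⁻¹ • intVec2 v₂ ∈ U := by
  obtain ⟨V, hV, rfl⟩ := hopen
  obtain ⟨x, hxV, hx⟩ := hne
  obtain ⟨p, q, hpq, hp, hq, ⟨hpV, hpx⟩, ⟨hqV, hqx⟩⟩ :=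
    exists_isRationalUnitVector_ne_mem (mem_sphere_zero_iff_norm.1 hx) (hV.inter isOpen_ball)
      ⟨hxV, mem_ball_self one_pos⟩
  obtain ⟨N, v₁, v₂, hN, hv₁, hv₂⟩ := hp.exists_common_multiple hq
  have hN0 : (N : ℝ) ≠ 0 := by positivity
  have hnorm₁ : ‖intVec2 v₁‖ = N := by simp [hv₁, norm_smul, hp.1]
  have hnorm₂ : ‖intVec2 v₂‖ = N := by simp [hv₂, norm_smul, hq.1]
  refine ⟨v₁, v₂, ?_, hnorm₁.trans hnorm₂.symm, ⟨N, hN, hnorm₁⟩, ?_, ?_⟩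
  · refine linearIndependent_pair_of_norm_eq (norm_ne_zero_iff.1 (hnorm₂ ▸ hN0))
      (hnorm₁.trans hnorm₂.symm) ?_ ?_
    · rw [hv₁, hv₂]
      exact (smul_right_injective _ hN0).ne hpq
    · rw [hv₁, hv₂, ← smul_neg]
      exact (smul_right_injective _ hN0).ne (ne_neg_of_mem_ball hpx hqx hq.1)
  · rw [hnorm₁, hv₁, inv_smul_smul₀ hN0]
    exact ⟨hpV, mem_sphere_zero_iff_norm.2 hp.1⟩
  · rw [hnorm₂, hv₂, inv_smul_smul₀ hN0]
    exact ⟨hqV, mem_sphere_zero_iff_norm.2 hq.1⟩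

/-- **Lattice vectors within a given arc.** If `U` is a nonempty open arc of the unit
circle `S¹ ⊂ ℝ²` (a nonempty relatively open connected proper subset of the circle),
then there are `v₁, v₂ ∈ ℤ²` which are linearly independent over `ℝ`, have the same
norm, this common norm is a positive integer, and whose normalizations lie in `U`. -/
theorem lattice_vectors_in_arc (U : Set (EuclideanSpace ℝ (Fin 2)))
    (hsub : U ⊆ Metric.sphere (0 : EuclideanSpace ℝ (Fin 2)) 1)
    (hne : U.Nonempty) (hconn : IsConnected U)
    (hopen : ∃ V : Set (EuclideanSpace ℝ (Fin 2)), IsOpen V ∧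
      U = V ∩ Metric.sphere (0 : EuclideanSpace ℝ (Fin 2)) 1)
    (hproper : U ≠ Metric.sphere (0 : EuclideanSpace ℝ (Fin 2)) 1) :
    ∃ v₁ v₂ : Fin 2 → ℤ,
      LinearIndependent ℝ ![intVec2 v₁, intVec2 v₂] ∧
      ‖intVec2 v₁‖ = ‖intVec2 v₂‖ ∧
      (∃ N : ℕ, 0 < N ∧ ‖intVec2 v₁‖ = (N : ℝ)) ∧
      ‖intVec2 v₁‖⁻¹ • intVec2 v₁ ∈ U ∧
      ‖intVec2 v₂‖⁻¹ • intVec2 v₂ ∈ U :=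
  lattice_vectors_in_arc_general U hne hopen
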